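/- For every prime power q there exists a Krasner hyperfield with exactly q elements, obtained by applying the Massouros construction to the finite field F_q. -/
import Mathlib


/-- Extension of a hyperoperation to subsets: `A ⊕ B = ⋃_{a∈A,b∈B} a ⊕ b`. -/
def hAddSet {R : Type*} (add : R → R → Set R) (A B : Set R) : Set R :=
  ⋃ a ∈ A, ⋃ b ∈ B, add a b

/-- Canonical hypergroup. -/
structure IsCanonicalHypergroup {R : Type*} (add : R → R → Set R) (zero : R) : Prop where
  nonempty : ∀ x y, (add x y).Nonempty
  comm : ∀ x y, add x y = add y x
  assoc : ∀ x y z, hAddSet add (add x y) {z} = hAddSet add {x} (add y z)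
  zero_add : ∀ x, add zero x = {x}
  opp : ∀ x, ∃! x', zero ∈ add x x'
  rev : ∀ x y z x' y', zero ∈ add x x' → zero ∈ add y y' →
    z ∈ add x y → y ∈ add x' z ∧ x ∈ add z y'

/-- Commutative Krasner hyperring with unit. -/
structure IsKrasnerHyperring {R : Type*} (add : R → R → Set R) (mul : R → R → R)
    (zero one : R) : Prop where
  toCanonical : IsCanonicalHypergroup add zero
  mul_assoc : ∀ a b c, mul (mul a b) c = mul a (mul b c)
  mul_comm : ∀ a b, mul a b = mul b a
  one_mul : ∀ a, mul one a = a
  zero_mul : ∀ a, mul zero a = zero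
  mul_zero : ∀ a, mul a zero = zero
  left_distrib : ∀ a b c, mul a '' add b c = add (mul a b) (mul a c)
  right_distrib : ∀ a b c, (fun x => mul x a) '' add b c = add (mul b a) (mul c a)

/-- Krasner hyperfield. -/
structure IsKrasnerHyperfield {R : Type*} (add : R → R → Set R) (mul : R → R → R)
    (zero one : R) : Prop where
  toHyperring : IsKrasnerHyperring add mul zero one
  zero_ne_one : zero ≠ one
  inv : ∀ a, a ≠ zero → ∃ b, b ≠ zero ∧ mul a b = one

open Classical in
/-- The Massouros hyperoperation on a field. -/
noncomputable def massAdd {F : Type*} [Field F] (a b : F) : Set F :=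
  if a = 0 then {b}
  else if b = 0 then {a}
  else if b = -a then Set.univ
  else {a, b, a + b}


section MassourosLemmas
variable {F : Type*} [Field F]

lemma massAdd_zero_left (b : F) : massAdd 0 b = {b} := by simp [massAdd]
lemma massAdd_zero_right (a : F) : massAdd a 0 = {a} := by
  unfold massAdd; split_ifs with h <;> simp_all
lemma massAdd_neg (a : F) (ha : a ≠ 0) : massAdd a (-a) = Set.univ := by
  unfold massAdd
  rw [if_neg ha, if_neg (neg_ne_zero.mpr ha), if_pos rfl]
lemma massAdd_def {a b : F} (ha : a ≠ 0) (hb : b ≠ 0) (hab : b ≠ -a) :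
    massAdd a b = {a, b, a + b} := by
  unfold massAdd; rw [if_neg ha, if_neg hb, if_neg hab]
lemma massAdd_comm (a b : F) : massAdd a b = massAdd b a := by
  rcases eq_or_ne a 0 with ha | ha
  · subst ha; rw [massAdd_zero_left, massAdd_zero_right]
  rcases eq_or_ne b 0 with hb | hb
  · subst hb; rw [massAdd_zero_left, massAdd_zero_right]
  rcases eq_or_ne b (-a) with hba | hba
  · subst hba
    rw [massAdd_neg a ha]
    have h2 := massAdd_neg (-a) (neg_ne_zero.mpr ha)
    rw [neg_neg] at h2
    rw [h2]
  have hab : a ≠ -b := fun h => hba (by rw [h, neg_neg])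
  rw [massAdd_def ha hb hba, massAdd_def hb ha hab, add_comm, Set.insert_comm]
lemma left_mem_massAdd {a b : F} (ha : a ≠ 0) (hb : b ≠ 0) : a ∈ massAdd a b := by
  rcases eq_or_ne b (-a) with h | h
  · rw [h, massAdd_neg a ha]; trivial
  · rw [massAdd_def ha hb h]; exact Set.mem_insert _ _
lemma right_mem_massAdd {a b : F} (ha : a ≠ 0) (hb : b ≠ 0) : b ∈ massAdd a b := by
  rw [massAdd_comm]; exact left_mem_massAdd hb ha
lemma zero_mem_massAdd_iff {a b : F} : 0 ∈ massAdd a b ↔ b = -a := by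
  rcases eq_or_ne a 0 with ha | ha
  · subst ha; simp [massAdd_zero_left, eq_comm]
  rcases eq_or_ne b 0 with hb | hb
  · subst hb; rw [massAdd_zero_right]
    simp [ha, eq_comm, neg_eq_zero]
  rcases eq_or_ne b (-a) with hba | hba
  · simp [hba, massAdd_neg a ha]
  · rw [massAdd_def ha hb hba]
    have : a + b ≠ 0 := fun h => hba (by linear_combination h)
    simp [ha.symm, hb.symm, hba, this.symm]

lemma massAdd_nonempty (a b : F) : (massAdd a b).Nonempty := by
  unfold massAdd; split_ifs <;> simp

lemma massAdd_rev1 {x y z : F} (h : z ∈ massAdd x y) : y ∈ massAdd (-x) z := by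
  rcases eq_or_ne x 0 with hx | hx
  · subst hx
    rw [massAdd_zero_left] at h
    rw [neg_zero, massAdd_zero_left]
    exact h ▸ rfl
  rcases eq_or_ne y 0 with hy | hy
  · subst hy
    rw [massAdd_zero_right, Set.mem_singleton_iff] at h
    rw [h]
    have h2 := massAdd_neg (-x) (neg_ne_zero.mpr hx)
    rw [neg_neg] at h2
    rw [h2]; trivial
  rcases eq_or_ne y (-x) with hyx | hyx
  · subst hyx
    rcases eq_or_ne z 0 with hz | hz
    · subst hz; rw [massAdd_zero_right]; rfl
    · exact left_mem_massAdd (neg_ne_zero.mpr hx) hz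
  rw [massAdd_def hx hy hyx] at h
  have hnx : (-x : F) ≠ 0 := neg_ne_zero.mpr hx
  rcases h with h | h | h
  · rw [h]
    have h2 := massAdd_neg (-x) hnx
    rw [neg_neg] at h2
    rw [h2]; trivial
  · rw [h]; exact right_mem_massAdd hnx hy
  · rw [h]
    have hxy : x + y ≠ 0 := fun h => hyx (by linear_combination h)
    have hne : x + y ≠ -(-x) := by rw [neg_neg]; intro h; exact hy (by linear_combination h)
    rw [massAdd_def hnx hxy hne]
    right; right
    show y = -x + (x + y)
    ring

lemma massAdd_left_distrib (a b c : F) :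
    (fun x => a * x) '' massAdd b c = massAdd (a * b) (a * c) := by
  rcases eq_or_ne a 0 with ha | ha
  · subst ha
    have : (fun x => (0 : F) * x) '' massAdd b c = {0} := by
      obtain ⟨w, hw⟩ := massAdd_nonempty b c
      apply Set.eq_singleton_iff_nonempty_unique_mem.mpr
      exact ⟨⟨0, w, hw, by simp⟩, by rintro y ⟨u, _, rfl⟩; simp⟩
    rw [this, zero_mul, zero_mul, massAdd_zero_left]
  rcases eq_or_ne b 0 with hb | hb
  · subst hb; rw [massAdd_zero_left, mul_zero, massAdd_zero_left, Set.image_singleton]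
  rcases eq_or_ne c 0 with hc | hc
  · subst hc; rw [massAdd_zero_right, mul_zero, massAdd_zero_right, Set.image_singleton]
  have hab : a * b ≠ 0 := mul_ne_zero ha hb
  have hac : a * c ≠ 0 := mul_ne_zero ha hc
  rcases eq_or_ne c (-b) with hcb | hcb
  · subst hcb
    rw [massAdd_neg b hb, mul_neg, massAdd_neg _ hab]
    ext w
    simp only [Set.image_univ, Set.mem_range, Set.mem_univ, iff_true]
    exact ⟨a⁻¹ * w, by field_simp⟩
  · have hne : a * c ≠ -(a * b) := by
      intro h
      exact hcb (mul_left_cancel₀ ha (by rw [mul_neg]; exact h))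
    rw [massAdd_def hb hc hcb, massAdd_def hab hac hne]
    rw [Set.image_insert_eq, Set.image_insert_eq, Set.image_singleton, mul_add]
lemma biUnion_eq_univ {α : Type*} {S : Set α} {f : α → Set α} {t : α}
    (ht : t ∈ S) (hu : f t = Set.univ) : ⋃ a ∈ S, f a = Set.univ :=
  Set.eq_univ_of_univ_subset (hu ▸ Set.subset_biUnion_of_mem ht)

lemma massAdd_assoc (x y z : F) :
    hAddSet massAdd (massAdd x y) {z} = hAddSet massAdd {x} (massAdd y z) := by
  have hL : hAddSet massAdd (massAdd x y) {z} = ⋃ a ∈ massAdd x y, massAdd a z := by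
    simp [hAddSet]
  have hR : hAddSet massAdd {x} (massAdd y z) = ⋃ a ∈ massAdd y z, massAdd x a := by
    simp [hAddSet]
  rw [hL, hR]
  rcases eq_or_ne x 0 with hx | hx
  · subst hx; simp [massAdd_zero_left]
  rcases eq_or_ne z 0 with hz | hz
  · subst hz; simp [massAdd_zero_right]
  rcases eq_or_ne y 0 with hy | hy
  · subst hy; simp [massAdd_zero_left, massAdd_zero_right]
  rcases eq_or_ne y (-x) with hyx | hyx
  · -- x ⊕ y = univ; both sides univ
    have hLu : (⋃ a ∈ massAdd x y, massAdd a z) = Set.univ := by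
      refine biUnion_eq_univ (t := -z) (by rw [hyx, massAdd_neg x hx]; trivial) ?_
      have := massAdd_neg (-z) (neg_ne_zero.mpr hz)
      rwa [neg_neg] at this
    have hRu : (⋃ a ∈ massAdd y z, massAdd x a) = Set.univ := by
      refine biUnion_eq_univ (t := y) (left_mem_massAdd hy hz) ?_
      rw [hyx]; exact massAdd_neg x hx
    rw [hLu, hRu]
  rcases eq_or_ne z (-y) with hzy | hzy
  · have hLu : (⋃ a ∈ massAdd x y, massAdd a z) = Set.univ := by
      refine biUnion_eq_univ (t := y) (right_mem_massAdd hx hy) ?_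
      rw [hzy]; exact massAdd_neg y hy
    have hRu : (⋃ a ∈ massAdd y z, massAdd x a) = Set.univ := by
      refine biUnion_eq_univ (t := -x) (by rw [hzy, massAdd_neg y hy]; trivial) (massAdd_neg x hx)
    rw [hLu, hRu]
  have hxy : x + y ≠ 0 := fun h => hyx (by linear_combination h)
  have hyz : y + z ≠ 0 := fun h => hzy (by linear_combination h)
  have hXY : massAdd x y = {x, y, x + y} := massAdd_def hx hy hyx
  have hYZ : massAdd y z = {y, z, y + z} := massAdd_def hy hz hzy
  rcases eq_or_ne z (-x) with hzx | hzx
  · have hXZ : massAdd x z = Set.univ := by rw [hzx]; exact massAdd_neg x hx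
    have hLu : (⋃ a ∈ massAdd x y, massAdd a z) = Set.univ :=
      biUnion_eq_univ (t := x) (by rw [hXY]; exact Set.mem_insert _ _) hXZ
    have hRu : (⋃ a ∈ massAdd y z, massAdd x a) = Set.univ :=
      biUnion_eq_univ (t := z) (by rw [hYZ]; simp) hXZ
    rw [hLu, hRu]
  rcases eq_or_ne (x + y + z) 0 with hs | hs
  · have hz' : z = -(x + y) := by linear_combination hs
    have hyz' : y + z = -x := by linear_combination hs
    have hLu : (⋃ a ∈ massAdd x y, massAdd a z) = Set.univ :=
      biUnion_eq_univ (t := x + y) (by rw [hXY]; simp)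
        (by rw [hz']; exact massAdd_neg _ hxy)
    have hRu : (⋃ a ∈ massAdd y z, massAdd x a) = Set.univ :=
      biUnion_eq_univ (t := y + z) (by rw [hYZ]; simp)
        (by rw [hyz']; exact massAdd_neg x hx)
    rw [hLu, hRu]
  · have hXZ : massAdd x z = {x, z, x + z} := massAdd_def hx hz hzx
    have h1 : massAdd (x + y) z = {x + y, z, x + y + z} :=
      massAdd_def hxy hz (fun h => hs (by linear_combination h))
    have h2 : massAdd x (y + z) = {x, y + z, x + (y + z)} :=
      massAdd_def hx hyz (fun h => hs (by linear_combination h))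
    rw [hXY, hYZ]
    rw [show ({x, y, x + y} : Set F) = insert x (insert y {x + y}) from rfl,
        show ({y, z, y + z} : Set F) = insert y (insert z {y + z}) from rfl]
    simp only [Set.biUnion_insert, Set.biUnion_singleton]
    rw [hXZ, hYZ, h1, hXY, h2, ← add_assoc]
    ext w
    simp only [Set.mem_union, Set.mem_insert_iff, Set.mem_singleton_iff]
    tauto

lemma massAdd_isKrasnerHyperfield (F : Type*) [Field F] :
    IsKrasnerHyperfield (massAdd (F := F)) (fun a b => a * b) 0 1 := by
  refine ⟨⟨⟨massAdd_nonempty, massAdd_comm, massAdd_assoc, massAdd_zero_left, ?_, ?_⟩,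
      fun a b c => mul_assoc a b c, mul_comm, one_mul, zero_mul, mul_zero,
      massAdd_left_distrib, ?_⟩, zero_ne_one, ?_⟩
  · intro x
    exact ⟨-x, zero_mem_massAdd_iff.mpr rfl, fun y hy => zero_mem_massAdd_iff.mp hy⟩
  · intro x y z x' y' hx' hy' hz
    rw [zero_mem_massAdd_iff] at hx' hy'
    subst hx'; subst hy'
    refine ⟨massAdd_rev1 hz, ?_⟩
    rw [massAdd_comm] at hz
    have := massAdd_rev1 hz
    rwa [massAdd_comm] at this
  · intro a b c
    have h : (fun x : F => x * a) = (fun x => a * x) := by funext x; rw [mul_comm]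
    rw [h, massAdd_left_distrib, mul_comm a b, mul_comm a c]
  · intro a ha
    exact ⟨a⁻¹, inv_ne_zero ha, mul_inv_cancel₀ ha⟩

end MassourosLemmas

/-- for every prime power `q` there is a Krasner hyperfield with exactly
`q` elements, namely the Massouros construction applied to the finite field `F_q`. -/
theorem exists_krasnerHyperfield_of_primePow (q : ℕ) (hq : IsPrimePow q) :
    ∃ (F : Type) (instField : Field F) (instFin : Fintype F),
      @Fintype.card F instFin = q ∧
        IsKrasnerHyperfield (@massAdd F instField) (fun a b => @HMul.hMul F F F _ a b)
          (@OfNat.ofNat F 0 (@Zero.toOfNat0 F inferInstance))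
          (@OfNat.ofNat F 1 (@One.toOfNat1 F inferInstance)) := by
  obtain ⟨p, n, hp, hn, rfl⟩ := hq
  haveI : Fact p.Prime := ⟨hp.nat_prime⟩
  haveI : Fintype (GaloisField p n) := Fintype.ofFinite _
  refine ⟨GaloisField p n, inferInstance, inferInstance, ?_, massAdd_isKrasnerHyperfield _⟩
  rw [← Nat.card_eq_fintype_card]
  exact GaloisField.card p n hn.ne'
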